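/- arXiv:2505.09165 — 3 statements merged into one kernel-verified Lean document; each statement's English description precedes it below -/
import Mathlib

section
/- Every eligible monochrome Bus Out configuration is solvable: if all passengers and buses have the same color, the congestion graph is acyclic, and the total capacity of buses equals the number of passengers, then the configuration can be reduced to the empty configuration by a sequence of legal transitions (for any number s ≥ 1 of parking spots). -/
/-- A Bus Out configuration: a congestion graph (vertex set `V`, blocking
relation `edge`, labels `(color, capacity)`), a passenger queue `Q` (list of
colors), and a tuple `S` of parking spots, each empty (`none`) or holding a
bus `(color, remaining seats)`. -/
structure Config where
  V : Finset ℕ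
  edge : ℕ → ℕ → Bool
  label : ℕ → ℕ × ℕ
  Q : List ℕ
  S : List (Option (ℕ × ℕ))

/-- A bus is free if no bus in the graph blocks it (out-degree zero). -/
def Config.Free (C : Config) (v : ℕ) : Prop :=
  v ∈ C.V ∧ ∀ w ∈ C.V, ¬ C.edge v w

/-- Player transition: move a free bus onto an empty spot. -/
def PlayerStep (C C' : Config) : Prop :=
  ∃ v i, C.Free v ∧ C.S[i]? = some none ∧
    C' = { C with V := C.V.erase v, S := C.S.set i (some (C.label v)) }

/-- Automatic transition: the head passenger boards a matching-colored bus on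
a spot; the bus departs (spot becomes empty) when it has no seat left. -/
def AutoStep (C C' : Config) : Prop :=
  ∃ x Q' i k, C.Q = x :: Q' ∧ C.S[i]? = some (some (x, k)) ∧
    C' = { C with Q := Q', S := C.S.set i (if k ≤ 1 then none else some (x, k - 1)) }

def AutoApplicable (C : Config) : Prop := ∃ C', AutoStep C C'

/-- A transition: automatic transitions are forced before player moves. -/
def Step (C C' : Config) : Prop :=
  (¬ AutoApplicable C ∧ PlayerStep C C') ∨ AutoStep C C'

/-- The empty configuration: no buses, no passengers, all spots empty. -/
def Config.IsEmpty (C : Config) : Prop :=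
  C.V = ∅ ∧ C.Q = [] ∧ ∀ sp ∈ C.S, sp = none

/-- Solvable: the empty configuration is reachable by transitions. -/
def Solvable (C : Config) : Prop :=
  ∃ C', Relation.ReflTransGen Step C C' ∧ C'.IsEmpty

/-- Acyclicity of the congestion graph (restricted to its vertex set). -/
def Config.Acyclic (C : Config) : Prop :=
  ∀ v, ¬ Relation.TransGen (fun u w => u ∈ C.V ∧ w ∈ C.V ∧ C.edge u w) v v

/-- Remaining seats of color `x` offered by a parking spot. -/
def spotSeats (x : ℕ) (sp : Option (ℕ × ℕ)) : ℕ :=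
  match sp with
  | some (y, k) => if y = x then k else 0
  | none => 0

/-- Total remaining capacity of color `x` over buses in the graph and spots. -/
def Config.capOf (C : Config) (x : ℕ) : ℕ :=
  (C.V.filter (fun v => (C.label v).1 = x)).sum (fun v => (C.label v).2)
  + (C.S.map (spotSeats x)).sum

/-- Eligibility: acyclic graph and, for every color, the number of passengers
equals the total remaining capacity of buses of that color. -/
def Config.Eligible (C : Config) : Prop :=
  C.Acyclic ∧ ∀ x, C.Q.count x = C.capOf x

/-- Well-formedness: all capacities / remaining seat counts are positive. -/
def Config.WF (C : Config) : Prop :=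
  (∀ v ∈ C.V, 1 ≤ (C.label v).2) ∧ ∀ sp ∈ C.S, ∀ x k, sp = some (x, k) → 1 ≤ k

/-- Colors occurring in the configuration (buses, queue, and spots). -/
def colorSet (C : Config) : Finset ℕ :=
  (C.V.image fun v => (C.label v).1) ∪ C.Q.toFinset
    ∪ ((C.S.filterMap id).map Prod.fst).toFinset

/- ################ auxiliary lemmas ################ -/

lemma busOut_sum_map_set (f : Option (ℕ × ℕ) → ℕ) :
    ∀ (l : List (Option (ℕ × ℕ))) (i : ℕ) (a b : Option (ℕ × ℕ)),
      l[i]? = some b →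
      ((l.set i a).map f).sum + f b = (l.map f).sum + f a := by
  intro l
  induction l with
  | nil => intro i a b h; simp at h
  | cons hd tl ih =>
    intro i a b h
    cases i with
    | zero =>
      simp only [List.getElem?_cons_zero] at h
      injection h with h; subst h
      simp [List.set]; omega
    | succ i =>
      simp only [List.getElem?_cons_succ] at h
      have := ih i a b h
      simp only [List.set, List.map_cons, List.sum_cons]
      omega

lemma busOut_exists_sink (C : Config) (hA : C.Acyclic) (hne : C.V.Nonempty) :
    ∃ v ∈ C.V, ∀ w ∈ C.V, ¬ C.edge v w := by
  let r : {v // v ∈ C.V} → {v // v ∈ C.V} → Prop := fun a b => C.edge b.val a.val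
  have hirr : ∀ a, ¬ Relation.TransGen r a a := by
    intro a ha
    have h1 : Relation.TransGen
        (Function.swap (fun u w : ℕ => u ∈ C.V ∧ w ∈ C.V ∧ C.edge u w)) a.val a.val := by
      refine Relation.TransGen.lift Subtype.val (fun p q hpq => ?_) _ _ ha
      exact ⟨q.2, p.2, hpq⟩
    rw [Relation.transGen_swap] at h1
    exact hA a.val h1
  haveI : IsIrrefl _ (Relation.TransGen r) := ⟨hirr⟩
  have hwfT : WellFounded (Relation.TransGen r) :=
    Finite.wellFounded_of_trans_of_irrefl _
  have hwf : WellFounded r :=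
    Subrelation.wf (fun h => Relation.TransGen.single h) hwfT
  obtain ⟨v, hv⟩ := hne
  obtain ⟨m, -, hm⟩ := hwf.has_min Set.univ ⟨⟨v, hv⟩, trivial⟩
  exact ⟨m.val, m.2, fun w hw hedge => hm ⟨w, hw⟩ trivial hedge⟩

lemma busOut_main : ∀ (n : ℕ) (C : Config) (x : ℕ),
    C.V.card + C.Q.length ≤ n →
    C.WF → C.Acyclic → C.Q.count x = C.capOf x →
    (∀ v ∈ C.V, (C.label v).1 = x) → (∀ y ∈ C.Q, y = x) →
    (∀ sp ∈ C.S, ∀ y k, sp = some (y, k) → y = x) → 1 ≤ C.S.length →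
    Solvable C := by
  intro n
  induction n with
  | zero =>
    intro C x hn hWF hA hcnt hbus hq hspot hs
    -- Q is empty and V is empty
    have hV : C.V = ∅ := Finset.card_eq_zero.mp (by omega)
    have hQ : C.Q = [] := List.length_eq_zero_iff.mp (by omega)
    have hcap : C.capOf x = 0 := by rw [← hcnt, hQ]; simp
    have hB : (C.S.map (spotSeats x)).sum = 0 := by
      unfold Config.capOf at hcap; omega
    refine ⟨C, Relation.ReflTransGen.refl, hV, hQ, ?_⟩
    intro sp hsp
    cases sp with
    | none => rfl
    | some p =>
      obtain ⟨y, k⟩ := p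
      have hy : y = x := hspot _ hsp y k rfl
      have hk : 1 ≤ k := hWF.2 _ hsp y k rfl
      have : spotSeats x (some (y, k)) = 0 :=
        List.sum_eq_zero_iff.mp hB _ (List.mem_map_of_mem hsp)
      simp [spotSeats, hy] at this
      omega
  | succ n ih =>
    intro C x hn hWF hA hcnt hbus hq hspot hs
    cases hQ : C.Q with
    | nil =>
      -- same as base case: everything must be empty
      have hcap : C.capOf x = 0 := by rw [← hcnt, hQ]; simp
      have hAeq : (C.V.filter (fun v => (C.label v).1 = x)).sum
          (fun v => (C.label v).2) = 0 ∧ (C.S.map (spotSeats x)).sum = 0 := by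
        unfold Config.capOf at hcap; omega
      have hV : C.V = ∅ := by
        by_contra hne
        obtain ⟨v, hv⟩ := Finset.nonempty_iff_ne_empty.mpr hne
        have hvf : v ∈ C.V.filter (fun v => (C.label v).1 = x) :=
          Finset.mem_filter.mpr ⟨hv, hbus v hv⟩
        have := Finset.sum_eq_zero_iff.mp hAeq.1 v hvf
        have := hWF.1 v hv
        omega
      refine ⟨C, Relation.ReflTransGen.refl, hV, hQ, ?_⟩
      intro sp hsp
      cases sp with
      | none => rfl
      | some p =>
        obtain ⟨y, k⟩ := p
        have hy : y = x := hspot _ hsp y k rfl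
        have hk : 1 ≤ k := hWF.2 _ hsp y k rfl
        have : spotSeats x (some (y, k)) = 0 :=
          List.sum_eq_zero_iff.mp hAeq.2 _ (List.mem_map_of_mem hsp)
        simp [spotSeats, hy] at this
        omega
    | cons x' Q' =>
      have hx' : x' = x := hq x' (by rw [hQ]; exact List.mem_cons_self)
      subst hx'
      by_cases hAuto : AutoApplicable C
      · -- perform the forced automatic step
        obtain ⟨C'', z, Q'', i, k, hQz, hget, -⟩ := hAuto
        rw [hQ] at hQz
        injection hQz with hz hQ''
        rw [← hz] at hget
        set C' : Config := ({ C with Q := Q', S := C.S.set i (if k ≤ 1 then none else some (x', k - 1)) } : Config) with hC'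
        have hmem : (some (x', k)) ∈ C.S := List.mem_of_getElem? hget
        have hk : 1 ≤ k := hWF.2 _ hmem x' k rfl
        -- capacities
        have hsum := busOut_sum_map_set (spotSeats x') C.S i
          (if k ≤ 1 then none else some (x', k - 1)) (some (x', k)) hget
        have hseats_old : spotSeats x' (some (x', k)) = k := by simp [spotSeats]
        have hseats_new : spotSeats x' (if k ≤ 1 then none else some (x', k - 1))
            = k - 1 := by
          by_cases h1 : k ≤ 1
          · simp [h1, spotSeats]
          · simp [h1, spotSeats]
        rw [hseats_old, hseats_new] at hsum
        have hcnt' : C'.Q.count x' = C'.capOf x' := by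
          rw [hC']
          simp only [Config.capOf]
          rw [hQ] at hcnt
          simp only [Config.capOf] at hcnt
          simp only [List.count_cons_self] at hcnt
          omega
        have hsolv' : Solvable C' := by
          refine ih C' x' ?_ ?_ ?_ hcnt' ?_ ?_ ?_ ?_
          · rw [hC']
            rw [hQ] at hn
            simp only [List.length_cons] at hn
            simp only [List.length]
            omega
          · rw [hC']
            refine ⟨fun v hv => hWF.1 v hv, fun sp hsp y k' hk' => ?_⟩
            rcases List.mem_or_eq_of_mem_set hsp with h | h
            · exact hWF.2 sp h y k' hk'
            · subst h
              by_cases h1 : k ≤ 1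
              · simp [h1] at hk'
              · simp [h1] at hk'
                omega
          · rw [hC']; exact hA
          · rw [hC']; exact fun v hv => hbus v hv
          · rw [hC']; intro y hy; exact hq y (by rw [hQ]; exact List.mem_cons_of_mem _ hy)
          · rw [hC']; intro sp hsp y k' hk'
            rcases List.mem_or_eq_of_mem_set hsp with h | h
            · exact hspot sp h y k' hk'
            · subst h
              by_cases h1 : k ≤ 1
              · simp [h1] at hk'
              · simp [h1] at hk'
                exact hk'.1.symm
          · rw [hC']; simpa using hs
        obtain ⟨Cf, hreach, hempty⟩ := hsolv'
        exact ⟨Cf, Relation.ReflTransGen.head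
          (Or.inr ⟨x', Q', i, k, hQ, hget, hC'⟩) hreach, hempty⟩
      · -- no automatic step applies: all spots empty; move a sink bus
        have hallnone : ∀ sp ∈ C.S, sp = none := by
          intro sp hsp
          cases sp with
          | none => rfl
          | some p =>
            obtain ⟨y, k⟩ := p
            have hy : y = x' := hspot _ hsp y k rfl
            subst hy
            obtain ⟨i, hi⟩ := List.mem_iff_getElem?.mp hsp
            exact absurd ⟨_, y, Q', i, k, hQ, hi, rfl⟩ hAuto
        have hB : (C.S.map (spotSeats x')).sum = 0 := by
          apply List.sum_eq_zero
          intro y hy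
          obtain ⟨sp, hsp, rfl⟩ := List.mem_map.mp hy
          rw [hallnone sp hsp]; rfl
        -- V nonempty
        have hVne : C.V.Nonempty := by
          by_contra hne
          rw [Finset.not_nonempty_iff_eq_empty] at hne
          rw [hQ] at hcnt
          simp only [Config.capOf, hne, Finset.filter_empty, Finset.sum_empty,
            List.count_cons_self, hB] at hcnt
          omega
        obtain ⟨v, hv, hvsink⟩ := busOut_exists_sink C hA hVne
        -- spot 0 is empty
        have h0 : C.S[0]? = some none := by
          cases hS : C.S with
          | nil => rw [hS] at hs; simp at hs
          | cons sp tl =>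
            have : sp = none := hallnone sp (by rw [hS]; exact List.mem_cons_self)
            rw [this]; rfl
        set C' : Config :=
          ({ C with V := C.V.erase v, S := C.S.set 0 (some (C.label v)) } : Config)
          with hC'
        have hplayer : PlayerStep C C' := ⟨v, 0, ⟨hv, hvsink⟩, h0, rfl⟩
        have hvf : v ∈ C.V.filter (fun v => (C.label v).1 = x') :=
          Finset.mem_filter.mpr ⟨hv, hbus v hv⟩
        have hAerase : ((C.V.erase v).filter (fun u => (C.label u).1 = x')).sum
            (fun u => (C.label u).2) + (C.label v).2
            = (C.V.filter (fun u => (C.label u).1 = x')).sum (fun u => (C.label u).2) := by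
          rw [Finset.filter_erase]
          exact Finset.sum_erase_add _ _ hvf
        have hsum := busOut_sum_map_set (spotSeats x') C.S 0
          (some (C.label v)) none h0
        have hseats_new : spotSeats x' (some (C.label v)) = (C.label v).2 := by
          rcases h : C.label v with ⟨a, b⟩
          have hcol := hbus v hv
          rw [h] at hcol
          simp only at hcol
          simp [spotSeats, hcol]
        rw [hseats_new] at hsum
        have hcnt' : C'.Q.count x' = C'.capOf x' := by
          rw [hC']
          simp only [Config.capOf]
          simp only [Config.capOf] at hcnt
          simp only [spotSeats] at hsum ⊢
          omega
        have hsolv' : Solvable C' := by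
          refine ih C' x' ?_ ?_ ?_ hcnt' ?_ ?_ ?_ ?_
          · rw [hC']; simp only []
            have : (C.V.erase v).card < C.V.card := Finset.card_erase_lt_of_mem hv
            omega
          · rw [hC']
            refine ⟨fun u hu => hWF.1 u (Finset.mem_of_mem_erase hu),
              fun sp hsp y k' hk' => ?_⟩
            rcases List.mem_or_eq_of_mem_set hsp with h | h
            · exact hWF.2 sp h y k' hk'
            · subst h
              injection hk' with hk'
              have h1 := hWF.1 v hv
              rw [hk'] at h1
              exact h1
          · rw [hC']
            intro u hu
            apply hA u
            refine Relation.TransGen.mono ?_ _ _ hu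
            intro a b hab
            exact ⟨Finset.mem_of_mem_erase hab.1, Finset.mem_of_mem_erase hab.2.1,
              hab.2.2⟩
          · rw [hC']; exact fun u hu => hbus u (Finset.mem_of_mem_erase hu)
          · rw [hC']; exact hq
          · rw [hC']; intro sp hsp y k' hk'
            rcases List.mem_or_eq_of_mem_set hsp with h | h
            · exact hspot sp h y k' hk'
            · subst h
              injection hk' with hk'
              have h2 := hbus v hv
              rw [hk'] at h2
              exact h2
          · rw [hC']; simpa using hs
        obtain ⟨Cf, hreach, hempty⟩ := hsolv'
        exact ⟨Cf, Relation.ReflTransGen.head (Or.inl ⟨hAuto, hplayer⟩) hreach, hempty⟩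


/-- Every eligible monochrome Bus Out configuration is solvable. -/
theorem monochrome_solvable (C : Config) (x : ℕ)
    (hWF : C.WF) (hE : C.Eligible)
    (hbus : ∀ v ∈ C.V, (C.label v).1 = x)
    (hq : ∀ y ∈ C.Q, y = x)
    (hspot : ∀ sp ∈ C.S, ∀ y k, sp = some (y, k) → y = x)
    (hs : 1 ≤ C.S.length) :
    Solvable C :=
  busOut_main (C.V.card + C.Q.length) C x le_rfl hWF hE.1 (hE.2 x) hbus hq hspot hs
end

section
/- Forward direction of the 3-Partition reduction (one spot, capacity 1): let M = {a₁, …, a_{3n}} be positive integers with sum nT, and suppose M admits a partition into n triples each summing to T. Then the configuration (G_M, Q_M, (ε)) is solvable, where G_M consists of 3n disjoint directed paths, the i-th path having a_i red buses of capacity 1 followed by a_i green buses of capacity 1 (the red buses must all be dispatched before any green bus of the same path), Q_M = (red^T green^T)^n, and there is a single parking spot, initially empty. -/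
/-- A 3-partition of `a 0, …, a (3n-1)` into `n` triples each summing to `T`. -/
def HasPartition (n T : ℕ) (a : ℕ → ℕ) : Prop :=
  ∃ f : ℕ → ℕ, (∀ i < 3 * n, f i < n) ∧
    ∀ g < n, ((Finset.range (3 * n)).filter (fun i => f i = g)).card = 3 ∧
      ((Finset.range (3 * n)).filter (fun i => f i = g)).sum a = T

/-- The (scaled) configuration reduced from a 3-Partition instance: `3n`
disjoint directed paths, the `i`-th consisting of `r * a i` red (color `0`)
capacity-1 buses followed by `r * a i` green (color `1`) capacity-1 buses
(each bus blocked by the next one to be dispatched after it), queue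
`(red^(rT) green^(rT))^n`, and `s` empty parking spots.
Vertex `Nat.pair i j` is the `j`-th bus of the `i`-th path. -/
def GMconf (n T : ℕ) (a : ℕ → ℕ) (r s : ℕ) : Config where
  V := (Finset.range (3 * n)).biUnion fun i =>
        (Finset.range (2 * (r * a i))).image fun j => Nat.pair i j
  edge := fun u w => (u.unpair.1 == w.unpair.1) && (u.unpair.2 == w.unpair.2 + 1)
  label := fun v => (if v.unpair.2 < r * a v.unpair.1 then 0 else 1, 1)
  Q := (List.replicate n
          (List.replicate (r * T) 0 ++ List.replicate (r * T) 1)).flatten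
  S := List.replicate s none



def pathRed (a : ℕ → ℕ) (i : ℕ) : List ℕ := (List.range (a i)).map (Nat.pair i)

def pathGreen (a : ℕ → ℕ) (i : ℕ) : List ℕ :=
  (List.range (a i)).map (fun j => Nat.pair i (a i + j))

def grp (n : ℕ) (f : ℕ → ℕ) (g : ℕ) : List ℕ :=
  (List.range (3 * n)).filter (fun i => f i = g)

def groupList (a : ℕ → ℕ) (n : ℕ) (f : ℕ → ℕ) (g : ℕ) : List ℕ :=
  (grp n f g).flatMap (pathRed a) ++ (grp n f g).flatMap (pathGreen a)

def fullList (a : ℕ → ℕ) (n : ℕ) (f : ℕ → ℕ) : List ℕ :=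
  (List.range n).flatMap (groupList a n f)

lemma mem_grp {n f g i} : i ∈ grp n f g ↔ i < 3 * n ∧ f i = g := by
  simp [grp, List.mem_filter]

lemma mem_pathRed {a i v} (h : v ∈ pathRed a i) :
    v.unpair.1 = i ∧ v.unpair.2 < a i := by
  obtain ⟨j, hj, rfl⟩ := List.mem_map.mp h
  rw [Nat.unpair_pair]
  exact ⟨rfl, List.mem_range.mp hj⟩

lemma mem_pathGreen {a i v} (h : v ∈ pathGreen a i) :
    v.unpair.1 = i ∧ a i ≤ v.unpair.2 := by
  obtain ⟨j, hj, rfl⟩ := List.mem_map.mp h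
  rw [Nat.unpair_pair]
  exact ⟨rfl, Nat.le_add_right _ _⟩

lemma mem_groupList {a n f g v} (h : v ∈ groupList a n f g) :
    v.unpair.1 < 3 * n ∧ f v.unpair.1 = g := by
  rcases List.mem_append.mp h with h | h <;>
  · obtain ⟨i, hi, hv⟩ := List.mem_flatMap.mp h
    obtain ⟨h1, h2⟩ := mem_grp.mp hi
    first
      | (exact (mem_pathRed hv).1 ▸ ⟨h1, h2⟩)
      | (exact (mem_pathGreen hv).1 ▸ ⟨h1, h2⟩)

def Rrel (u w : ℕ) : Prop := u.unpair.1 ≠ w.unpair.1 ∨ u.unpair.2 < w.unpair.2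

lemma pairwise_full (a : ℕ → ℕ) (n : ℕ) (f : ℕ → ℕ) :
    (fullList a n f).Pairwise Rrel := by
  unfold fullList
  rw [List.flatMap_def, List.pairwise_flatten]
  constructor
  · intro l hl
    obtain ⟨g, _, rfl⟩ := List.mem_map.mp hl
    unfold groupList
    rw [List.pairwise_append]
    have hgrp : (grp n f g).Pairwise (· < ·) :=
      List.pairwise_lt_range.filter _
    refine ⟨?_, ?_, ?_⟩
    · rw [List.flatMap_def, List.pairwise_flatten]
      constructor
      · intro l' hl'
        obtain ⟨i, _, rfl⟩ := List.mem_map.mp hl'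
        unfold pathRed
        rw [List.pairwise_map]
        exact List.pairwise_lt_range.imp fun h => by
          right; simpa [Nat.unpair_pair] using h
      · rw [List.pairwise_map]
        refine hgrp.imp ?_
        intro i i' hii x hx y hy
        left
        rw [(mem_pathRed hx).1, (mem_pathRed hy).1]
        omega
    · rw [List.flatMap_def, List.pairwise_flatten]
      constructor
      · intro l' hl'
        obtain ⟨i, _, rfl⟩ := List.mem_map.mp hl'
        unfold pathGreen
        rw [List.pairwise_map]
        exact List.pairwise_lt_range.imp fun h => by
          right; simpa [Nat.unpair_pair] using h
      · rw [List.pairwise_map]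
        refine hgrp.imp ?_
        intro i i' hii x hx y hy
        left
        rw [(mem_pathGreen hx).1, (mem_pathGreen hy).1]
        omega
    · intro x hx y hy
      obtain ⟨i, _, hxi⟩ := List.mem_flatMap.mp hx
      obtain ⟨i', _, hyi⟩ := List.mem_flatMap.mp hy
      obtain ⟨hx1, hx2⟩ := mem_pathRed hxi
      obtain ⟨hy1, hy2⟩ := mem_pathGreen hyi
      by_cases hii : i = i'
      · subst hii; right; omega
      · left; rw [hx1, hy1]; exact hii
  · rw [List.pairwise_map]
    refine List.pairwise_lt_range.imp ?_
    intro g g' hgg x hx y hy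
    left
    have h1 := (mem_groupList hx).2
    have h2 := (mem_groupList hy).2
    intro hEq
    rw [hEq, h2] at h1
    omega

lemma nodup_full (a : ℕ → ℕ) (n : ℕ) (f : ℕ → ℕ) : (fullList a n f).Nodup :=
  (pairwise_full a n f).imp fun h => by
    rintro rfl
    rcases h with h | h
    · exact h rfl
    · exact lt_irrefl _ h

lemma flatMap_replicate (c : ℕ → ℕ) (x : ℕ) :
    ∀ l : List ℕ, l.flatMap (fun i => List.replicate (c i) x)
      = List.replicate ((l.map c).sum) x := by
  intro l
  induction l with
  | nil => rfl
  | cons i l ih =>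
    rw [List.flatMap_cons, ih, List.map_cons, List.sum_cons, List.replicate_add]

lemma sum_filter_range (a : ℕ → ℕ) (p : ℕ → Prop) [DecidablePred p] :
    ∀ m : ℕ, (((List.range m).filter (fun i => p i)).map a).sum
      = ∑ i ∈ (Finset.range m).filter p, a i := by
  intro m
  induction m with
  | zero => simp
  | succ m ih =>
    rw [List.range_succ, List.filter_append, List.map_append, List.sum_append,
      Finset.range_add_one, Finset.filter_insert]
    by_cases h : p m
    · rw [if_pos h, Finset.sum_insert (by simp)]
      simp [h, ih, Nat.add_comm]
    · rw [if_neg h]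
      simp [h, ih]

lemma mem_full {a : ℕ → ℕ} {n : ℕ} {f : ℕ → ℕ} (hf : ∀ i < 3 * n, f i < n) {v : ℕ} :
    v ∈ fullList a n f ↔ ∃ i < 3 * n, ∃ j < 2 * a i, v = Nat.pair i j := by
  constructor
  · intro h
    obtain ⟨g, hg, hv⟩ := List.mem_flatMap.mp h
    rcases List.mem_append.mp hv with h' | h'
    · obtain ⟨i, hi, hvi⟩ := List.mem_flatMap.mp h'
      obtain ⟨j, hj, rfl⟩ := List.mem_map.mp hvi
      have h1 := (mem_grp.mp hi).1
      have hj' := List.mem_range.mp hj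
      exact ⟨i, h1, j, by omega, rfl⟩
    · obtain ⟨i, hi, hvi⟩ := List.mem_flatMap.mp h'
      obtain ⟨j, hj, rfl⟩ := List.mem_map.mp hvi
      have h1 := (mem_grp.mp hi).1
      have hj' := List.mem_range.mp hj
      exact ⟨i, h1, a i + j, by omega, rfl⟩
  · rintro ⟨i, hi, j, hj, rfl⟩
    refine List.mem_flatMap.mpr ⟨f i, List.mem_range.mpr (hf i hi), ?_⟩
    by_cases hja : j < a i
    · exact List.mem_append.mpr (Or.inl (List.mem_flatMap.mpr
        ⟨i, mem_grp.mpr ⟨hi, rfl⟩, List.mem_map.mpr ⟨j, List.mem_range.mpr hja, rfl⟩⟩))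
    · refine List.mem_append.mpr (Or.inr (List.mem_flatMap.mpr
        ⟨i, mem_grp.mpr ⟨hi, rfl⟩, List.mem_map.mpr ⟨j - a i, List.mem_range.mpr (by omega), ?_⟩⟩))
      congr 1
      omega

def col (a : ℕ → ℕ) (v : ℕ) : ℕ := if v.unpair.2 < a v.unpair.1 then 0 else 1

lemma map_col_group {a : ℕ → ℕ} {n : ℕ} {f : ℕ → ℕ} {g T : ℕ}
    (hsum : ∑ i ∈ (Finset.range (3 * n)).filter (fun i => f i = g), a i = T) :
    (groupList a n f g).map (col a)
      = List.replicate T 0 ++ List.replicate T 1 := by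
  have hsum' : ((grp n f g).map a).sum = T := by
    rw [grp, sum_filter_range a (fun i => f i = g) (3 * n)]
    exact hsum
  have hred : ∀ i, (pathRed a i).map (col a) = List.replicate (a i) 0 := by
    intro i
    unfold pathRed
    rw [List.map_map]
    rw [List.map_congr_left (g := fun _ => 0) ?_]
    · rw [List.map_const', List.length_range]
    · intro j hj
      simp only [Function.comp, col, Nat.unpair_pair]
      rw [if_pos (List.mem_range.mp hj)]
  have hgreen : ∀ i, (pathGreen a i).map (col a) = List.replicate (a i) 1 := by
    intro i
    unfold pathGreen
    rw [List.map_map]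
    rw [List.map_congr_left (g := fun _ => 1) ?_]
    · rw [List.map_const', List.length_range]
    · intro j hj
      simp only [Function.comp, col, Nat.unpair_pair]
      rw [if_neg (by omega)]
  unfold groupList
  rw [List.map_append, List.map_flatMap, List.map_flatMap]
  congr 1
  · rw [List.flatMap_def, List.map_congr_left (g := fun i => List.replicate (a i) 0)
      (fun i _ => hred i), ← List.flatMap_def, flatMap_replicate, hsum']
  · rw [List.flatMap_def, List.map_congr_left (g := fun i => List.replicate (a i) 1)
      (fun i _ => hgreen i), ← List.flatMap_def, flatMap_replicate, hsum']

lemma map_col_full {a : ℕ → ℕ} {n : ℕ} {f : ℕ → ℕ} {T : ℕ}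
    (hsum : ∀ g < n, ∑ i ∈ (Finset.range (3 * n)).filter (fun i => f i = g), a i = T) :
    (fullList a n f).map (col a)
      = (List.replicate n (List.replicate T 0 ++ List.replicate T 1)).flatten := by
  unfold fullList
  rw [List.map_flatMap, List.flatMap_def,
    List.map_congr_left (g := fun _ => List.replicate T 0 ++ List.replicate T 1)
      (fun g hg => map_col_group (hsum g (List.mem_range.mp hg))),
    List.map_const', List.length_range]

def Good (e : ℕ → ℕ → Bool) : List ℕ → Prop
  | [] => True
  | v :: L => (∀ w ∈ v :: L, e v w = false) ∧ Good e L

lemma good_of_pairwise (e : ℕ → ℕ → Bool) :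
    ∀ L : List ℕ, (∀ v ∈ L, e v v = false) →
      L.Pairwise (fun u w => e u w = false) → Good e L := by
  intro L
  induction L with
  | nil => intro _ _; trivial
  | cons v L ih =>
    intro hirr hpw
    obtain ⟨h1, h2⟩ := List.pairwise_cons.mp hpw
    refine ⟨?_, ih (fun w hw => hirr w (List.mem_cons_of_mem _ hw)) h2⟩
    intro w hw
    rcases List.mem_cons.mp hw with rfl | hw
    · exact hirr w (List.mem_cons_self)
    · exact h1 w hw

lemma good_full (a : ℕ → ℕ) (n : ℕ) (f : ℕ → ℕ) :
    Good (fun u w => (u.unpair.1 == w.unpair.1) && (u.unpair.2 == w.unpair.2 + 1))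
      (fullList a n f) := by
  apply good_of_pairwise
  · intro v _
    simp
  · refine (pairwise_full a n f).imp ?_
    intro u w h
    rcases h with h | h
    · simp [h]
    · have : u.unpair.2 ≠ w.unpair.2 + 1 := by omega
      simp [this]

lemma solve_list (e : ℕ → ℕ → Bool) (lab : ℕ → ℕ × ℕ)
    (hcap : ∀ v, (lab v).2 = 1) :
    ∀ L : List ℕ, L.Nodup → Good e L →
      Solvable ⟨L.toFinset, e, lab, L.map (fun v => (lab v).1), [none]⟩ := by
  intro L
  induction L with
  | nil =>
    intro _ _
    exact ⟨_, Relation.ReflTransGen.refl, by simp [Config.IsEmpty]⟩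
  | cons v L ih =>
    intro hnd hg
    obtain ⟨hv, hgL⟩ := hg
    obtain ⟨hvL, hndL⟩ := List.nodup_cons.mp hnd
    obtain ⟨C', hC', hE⟩ := ih hndL hgL
    refine ⟨C', ?_, hE⟩
    have hnoauto : ¬ AutoApplicable ⟨(v :: L).toFinset, e, lab,
        (v :: L).map (fun v => (lab v).1), [none]⟩ := by
      rintro ⟨D, x, Q', i, k, hQ, hS, hD⟩
      match i with
      | 0 => simp at hS
      | (i+1) => simp at hS
    have hlabv : lab v = ((lab v).1, 1) := by
      have := hcap v
      exact Prod.ext rfl this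
    have step1 : Step ⟨(v :: L).toFinset, e, lab, (v :: L).map (fun v => (lab v).1), [none]⟩
        ⟨L.toFinset, e, lab, (v :: L).map (fun v => (lab v).1), [some ((lab v).1, 1)]⟩ := by
      left
      refine ⟨hnoauto, v, 0, ⟨by simp, ?_⟩, rfl, ?_⟩
      · intro w hw
        have := hv w (by simpa using hw)
        simp [this]
      · simp only [Config.mk.injEq]
        constructor
        · rw [List.toFinset_cons, Finset.erase_insert (by simpa using hvL)]
        · simp [← hlabv]
    have step2 : Step ⟨L.toFinset, e, lab, (v :: L).map (fun v => (lab v).1), [some ((lab v).1, 1)]⟩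
        ⟨L.toFinset, e, lab, L.map (fun v => (lab v).1), [none]⟩ := by
      right
      refine ⟨(lab v).1, L.map (fun v => (lab v).1), 0, 1, rfl, rfl, ?_⟩
      simp only [Config.mk.injEq]
      norm_num
    exact Relation.ReflTransGen.head step1 (Relation.ReflTransGen.head step2 hC')


/-- Forward direction of the 3-Partition reduction with one spot and
capacity-1 buses: a 3-partition yields a solution. -/
theorem threePartition_to_busOut (n T : ℕ) (a : ℕ → ℕ)
    (hn : 0 < n) (hT : 0 < T)
    (hpos : ∀ i < 3 * n, 0 < a i)
    (hsum : ∑ i ∈ Finset.range (3 * n), a i = n * T)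
    (hpart : HasPartition n T a) :
    Solvable (GMconf n T a 1 1) := by
  obtain ⟨f, hf, hg⟩ := hpart
  have hcol : (fun v => ((GMconf n T a 1 1).label v).1) = col a := by
    funext v
    simp [GMconf, col, Nat.one_mul]
  have hV : (GMconf n T a 1 1).V = (fullList a n f).toFinset := by
    ext v
    rw [List.mem_toFinset, mem_full hf]
    simp only [GMconf, Finset.mem_biUnion, Finset.mem_range, Finset.mem_image, Nat.one_mul]
    constructor
    · rintro ⟨i, hi, j, hj, rfl⟩
      exact ⟨i, hi, j, hj, rfl⟩
    · rintro ⟨i, hi, j, hj, rfl⟩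
      exact ⟨i, hi, j, hj, rfl⟩
  have hQ : (GMconf n T a 1 1).Q
      = (fullList a n f).map (fun v => ((GMconf n T a 1 1).label v).1) := by
    rw [hcol, map_col_full (fun g hg' => (hg g hg').2)]
    simp [GMconf, Nat.one_mul]
  have hS : (GMconf n T a 1 1).S = [none] := rfl
  have hconf : GMconf n T a 1 1 = ⟨(fullList a n f).toFinset, (GMconf n T a 1 1).edge,
      (GMconf n T a 1 1).label,
      (fullList a n f).map (fun v => ((GMconf n T a 1 1).label v).1), [none]⟩ := by
    rw [← hV, ← hQ, ← hS]
  rw [hconf]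
  exact solve_list _ _ (fun v => rfl) _ (nodup_full a n f) (good_full a n f)
end

section
/- Backward direction of the 3-Partition reduction (one spot, capacity 1): let M = {a₁, …, a_{3n}} be positive integers with sum nT and T/4 < a_i < T/2 for all i. If the configuration (G_M, Q_M, (ε)) is solvable, where G_M consists of 3n disjoint directed paths (the i-th having a_i red capacity-1 buses followed by a_i green capacity-1 buses) and Q_M = (red^T green^T)^n with one parking spot, then M admits a partition into n triples each summing to T. -/

-- ### queue lemmas
def qcol (T k : ℕ) : ℕ := if k % (2*T) < T then 0 else 1

def Qfull (n T : ℕ) : List ℕ :=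
  (List.replicate n (List.replicate T 0 ++ List.replicate T 1)).flatten

lemma map_const_replicate {f : ℕ → ℕ} {c : ℕ} (l : List ℕ) (h : ∀ x ∈ l, f x = c) :
    l.map f = List.replicate l.length c := by
  induction l with
  | nil => simp
  | cons x l ih =>
    simp only [List.map_cons, List.length_cons, List.replicate_succ]
    rw [h x (by simp), ih (fun y hy => h y (by simp [hy]))]

lemma Qfull_eq (n T : ℕ) : Qfull n T = (List.range (n*(2*T))).map (qcol T) := by
  induction n with
  | zero => simp [Qfull]
  | succ m ih =>
    have h1 : Qfull (m+1) T
        = (List.replicate T 0 ++ List.replicate T 1) ++ Qfull m T := by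
      simp [Qfull, List.replicate_succ]
    have h2 : (m+1)*(2*T) = 2*T + m*(2*T) := by ring
    rw [h1, ih, h2, List.range_add, List.map_append]
    congr 1
    · have : List.range (2*T) = List.range T ++ (List.range T).map (T + ·) := by
        rw [two_mul, List.range_add]
      rw [this, List.map_append, List.map_map]
      congr 1
      · rw [map_const_replicate (c := 0), List.length_range]
        intro x hx
        simp only [List.mem_range] at hx
        have hx2 : x % (2*T) = x := Nat.mod_eq_of_lt (by omega)
        simp [qcol, hx2, hx]
      · rw [map_const_replicate (c := 1), List.length_range]
        intro x hx
        simp only [List.mem_range] at hx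
        have hx2 : (T + x) % (2*T) = T + x := Nat.mod_eq_of_lt (by omega)
        simp [qcol, hx2]
    · rw [List.map_map]
      apply List.map_congr_left
      intro x hx
      simp only [Function.comp_apply]
      unfold qcol
      congr 1
      rw [Nat.add_mod_left]

lemma Qfull_length (n T : ℕ) : (Qfull n T).length = n * (2*T) := by
  rw [Qfull_eq]; simp

lemma Qfull_drop (n T q : ℕ) (hq : q < n * (2*T)) :
    (Qfull n T).drop q = qcol T q :: (Qfull n T).drop (q+1) := by
  have h := List.drop_eq_getElem_cons (l := Qfull n T) (by rw [Qfull_length]; exact hq)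
  rw [h]
  have : (Qfull n T)[q]'(by rw [Qfull_length]; exact hq) = qcol T q := by
    simp [Qfull_eq, hq]
  rw [this]

-- ### dispatch list machinery
def kcol (a : ℕ → ℕ) (L : List ℕ) (k : ℕ) : ℕ :=
  if (L.take k).count (L.getD k 0) < a (L.getD k 0) then 0 else 1

lemma kcol_append (a : ℕ → ℕ) (L : List ℕ) (i k : ℕ) (hk : k < L.length) :
    kcol a (L ++ [i]) k = kcol a L k := by
  unfold kcol
  rw [List.getD_eq_getElem?_getD, List.getD_eq_getElem?_getD,
    List.getElem?_append_left hk, List.take_append_of_le_length (by omega)]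

lemma kcol_last (a : ℕ → ℕ) (L : List ℕ) (i : ℕ) :
    kcol a (L ++ [i]) L.length = if L.count i < a i then 0 else 1 := by
  unfold kcol
  rw [List.getD_eq_getElem?_getD, List.getElem?_append_right (le_refl _)]
  simp [List.take_left]

lemma count_append_single (L : List ℕ) (j i : ℕ) :
    (L ++ [j]).count i = L.count i + if i = j then 1 else 0 := by
  rcases eq_or_ne i j with h | h <;> simp [h, List.count_append, List.count_cons] <;> omega

lemma length_eq_sum_count (m : ℕ) (L : List ℕ) (h : ∀ x ∈ L, x < m) :
    ∑ i ∈ Finset.range m, L.count i = L.length := by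
  induction L with
  | nil => simp
  | cons x L ih =>
    have hx : x < m := h x (by simp)
    have : ∀ i, (x :: L).count i = L.count i + if i = x then 1 else 0 := by
      intro i; by_cases h : i = x <;> simp [List.count_cons, h] <;> omega
    simp only [this, Finset.sum_add_distrib, ih (fun y hy => h y (by simp [hy]))]
    rw [Finset.sum_ite_eq' (Finset.range m) x (fun _ => 1)]
    simp [Finset.mem_range.2 hx, List.length_cons]

-- ### the vertex set shape
def Vst (n : ℕ) (a c : ℕ → ℕ) : Finset ℕ :=
  (Finset.range (3*n)).biUnion fun i => (Finset.Ico (c i) (2*(a i))).image (Nat.pair i)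

lemma mem_Vst {n : ℕ} {a c : ℕ → ℕ} {x : ℕ} :
    x ∈ Vst n a c ↔ ∃ i < 3*n, ∃ j, c i ≤ j ∧ j < 2*(a i) ∧ x = Nat.pair i j := by
  simp only [Vst, Finset.mem_biUnion, Finset.mem_range, Finset.mem_image, Finset.mem_Ico]
  constructor
  · rintro ⟨i, hi, j, ⟨h1, h2⟩, rfl⟩; exact ⟨i, hi, j, h1, h2, rfl⟩
  · rintro ⟨i, hi, j, h1, h2, rfl⟩; exact ⟨i, hi, j, ⟨h1, h2⟩, rfl⟩

lemma Vst_erase {n : ℕ} {a c : ℕ → ℕ} {i0 : ℕ} (hi0 : i0 < 3*n) :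
    (Vst n a c).erase (Nat.pair i0 (c i0))
      = Vst n a (fun i => if i = i0 then c i + 1 else c i) := by
  ext x
  rw [Finset.mem_erase, mem_Vst, mem_Vst]
  constructor
  · rintro ⟨hne, i, hi, j, h1, h2, rfl⟩
    refine ⟨i, hi, j, ?_, h2, rfl⟩
    by_cases hii : i = i0
    · rw [if_pos hii]
      subst hii
      rcases Nat.lt_or_ge (c i) j with h | h
      · omega
      · exfalso; apply hne; rw [Nat.pair_eq_pair]; omega
    · rw [if_neg hii]; exact h1
  · rintro ⟨i, hi, j, h1, h2, rfl⟩
    by_cases hii : i = i0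
    · rw [if_pos hii] at h1
      subst hii
      refine ⟨?_, i, hi, j, by omega, h2, rfl⟩
      rw [Ne, Nat.pair_eq_pair]; omega
    · rw [if_neg hii] at h1
      refine ⟨?_, i, hi, j, h1, h2, rfl⟩
      rw [Ne, Nat.pair_eq_pair]; tauto

-- ### the invariant
def BusInv (n T : ℕ) (a : ℕ → ℕ) (C : Config) : Prop :=
  C.edge = (GMconf n T a 1 1).edge ∧ C.label = (GMconf n T a 1 1).label ∧
  ∃ L : List ℕ, (∀ x ∈ L, x < 3*n) ∧ (∀ i, L.count i ≤ 2*(a i)) ∧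
    C.V = Vst n a (fun i => L.count i) ∧
    ∃ q, C.Q = (Qfull n T).drop q ∧ (∀ k < q, kcol a L k = qcol T k) ∧
      ((C.S = [none] ∧ L.length = q) ∨
       (C.S = [some (kcol a L q, 1)] ∧ L.length = q + 1))

lemma BusInv_step {n T : ℕ} {a : ℕ → ℕ} {C C' : Config}
    (h : BusInv n T a C) (hs : Step C C') : BusInv n T a C' := by
  obtain ⟨hE, hLab, L, hmem, hcnt, hV, q, hQ, hM, hcase⟩ := h
  rcases hs with ⟨-, v, i, hfree, hget, rfl⟩ | ⟨x, Q', i, k, hQ', hget, rfl⟩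
  · -- player step
    rcases hcase with ⟨hS, hlen⟩ | ⟨hS, hlen⟩
    swap
    · rw [hS] at hget; rcases i with _ | i <;> simp at hget
    rw [hS] at hget
    have hi : i = 0 := by rcases i with _ | i <;> simp_all
    subst hi
    obtain ⟨hvV, hfr⟩ := hfree
    rw [hV] at hvV
    obtain ⟨i0, hi0, j, hj1, hj2, rfl⟩ := mem_Vst.1 hvV
    have hj : j = L.count i0 := by
      by_contra hne
      have hjpos : 1 ≤ j := by omega
      have hw : Nat.pair i0 (j-1) ∈ C.V := by
        rw [hV]; exact mem_Vst.2 ⟨i0, hi0, j-1, by omega, by omega, rfl⟩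
      have := hfr _ hw
      rw [hE] at this
      apply this
      show ((Nat.pair i0 j).unpair.1 == (Nat.pair i0 (j-1)).unpair.1
        && (Nat.pair i0 j).unpair.2 == (Nat.pair i0 (j-1)).unpair.2 + 1) = true
      simp only [Nat.unpair_pair, Bool.and_eq_true, beq_iff_eq]
      exact ⟨trivial, by omega⟩
    subst hj
    refine ⟨hE, hLab, L ++ [i0], ?_, ?_, ?_, q, hQ, ?_, Or.inr ⟨?_, by simp [hlen]⟩⟩
    · intro x hx
      rcases List.mem_append.1 hx with hx | hx
      · exact hmem x hx
      · simp at hx; omega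
    · intro i
      rw [count_append_single]
      rcases eq_or_ne i i0 with rfl | hne
      · simp; omega
      · simp [hne]; exact hcnt i
    · show C.V.erase _ = _
      rw [hV, Vst_erase hi0]
      congr 1
      funext i
      rw [count_append_single]
      rcases eq_or_ne i i0 with rfl | hne
      · simp
      · simp [hne]
    · intro k hk
      rw [kcol_append a L i0 k (by omega)]
      exact hM k hk
    · show C.S.set 0 (some (C.label _)) = _
      rw [hS, hLab, ← hlen, kcol_last]
      simp only [GMconf, Nat.unpair_pair, one_mul]
      rfl
  · -- auto step
    rcases hcase with ⟨hS, hlen⟩ | ⟨hS, hlen⟩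
    · rw [hS] at hget; rcases i with _ | i <;> simp at hget
    rw [hS] at hget
    have hi : i = 0 := by rcases i with _ | i <;> simp_all
    subst hi
    simp only [List.getElem?_cons_zero] at hget
    simp only [Option.some.injEq, Prod.mk.injEq] at hget
    obtain ⟨hx, hk⟩ := hget
    have hk : k = 1 := hk.symm
    rw [hQ] at hQ'
    have hqlt : q < n * (2*T) := by
      by_contra hge
      rw [List.drop_eq_nil_of_le (by rw [Qfull_length]; omega)] at hQ'
      exact List.cons_ne_nil _ _ hQ'.symm
    rw [Qfull_drop n T q hqlt] at hQ'
    injection hQ' with hx2 hQ2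
    refine ⟨hE, hLab, L, hmem, hcnt, hV, q+1, ?_, ?_, Or.inl ⟨?_, hlen⟩⟩
    · exact hQ2.symm
    · intro kk hkk
      rcases eq_or_ne kk q with rfl | hne
      · rw [hx, ← hx2]
      · exact hM kk (by omega)
    · show C.S.set 0 _ = [none]
      rw [hS, hk]
      simp

lemma BusInv_init (n T : ℕ) (a : ℕ → ℕ) : BusInv n T a (GMconf n T a 1 1) := by
  refine ⟨rfl, rfl, [], by simp, by simp, ?_, 0, ?_, by intro k hk; omega,
    Or.inl ⟨rfl, rfl⟩⟩
  · show (Finset.range (3*n)).biUnion _ = _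
    unfold Vst
    apply Finset.biUnion_congr rfl
    intro i _
    congr 1
    show Finset.range (2*(1*a i)) = Finset.Ico (List.count i []) (2*a i)
    rw [List.count_nil, one_mul, Finset.range_eq_Ico]
  · show (List.replicate n (List.replicate (1*T) 0 ++ List.replicate (1*T) 1)).flatten = _
    rw [List.drop_zero, Qfull, one_mul]

lemma BusInv_rtg {n T : ℕ} {a : ℕ → ℕ} {C C' : Config}
    (h : Relation.ReflTransGen Step C C') (h0 : BusInv n T a C) : BusInv n T a C' := by
  induction h with
  | refl => exact h0
  | tail _ hs ih => exact BusInv_step ih hs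

lemma exists_dispatch {n T : ℕ} {a : ℕ → ℕ} (hsolv : Solvable (GMconf n T a 1 1)) :
    ∃ L : List ℕ, (∀ x ∈ L, x < 3*n) ∧ (∀ i < 3*n, L.count i = 2*(a i)) ∧
      (∀ k < L.length, kcol a L k = qcol T k) := by
  obtain ⟨C', hr, hV0, hQ0, hS0⟩ := hsolv
  obtain ⟨-, -, L, hmem, hcnt, hV, q, hQ, hM, hcase⟩ := BusInv_rtg hr (BusInv_init n T a)
  rcases hcase with ⟨hS, hlen⟩ | ⟨hS, hlen⟩
  swap
  · exfalso
    have := hS0 (some (kcol a L q, 1)) (by rw [hS]; simp)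
    simp at this
  refine ⟨L, hmem, ?_, fun k hk => hM k (by omega)⟩
  intro i hi
  have h2 : ¬ (L.count i < 2*(a i)) := by
    intro hlt
    have : Nat.pair i (L.count i) ∈ C'.V := by
      rw [hV]; exact mem_Vst.2 ⟨i, hi, L.count i, le_refl _, hlt, rfl⟩
    rw [hV0] at this
    simp at this
  have := hcnt i
  omega

-- ### prefix counts
def cntL (L : List ℕ) (i k : ℕ) : ℕ := (L.take k).count i

lemma cntL_mono (L : List ℕ) (i : ℕ) {k k' : ℕ} (h : k ≤ k') :
    cntL L i k ≤ cntL L i k' := by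
  have h2 : L.take k = (L.take k').take k := by rw [List.take_take, min_eq_left h]
  rw [cntL, cntL, h2]
  exact (List.take_sublist _ _).count_le _

lemma cntL_le (L : List ℕ) (i k : ℕ) : cntL L i k ≤ L.count i :=
  (List.take_sublist _ _).count_le _

lemma cntL_len (L : List ℕ) (i : ℕ) : cntL L i L.length = L.count i := by
  rw [cntL, List.take_length]

lemma cntL_zero (L : List ℕ) (i : ℕ) : cntL L i 0 = 0 := by simp [cntL]

lemma cntL_succ (L : List ℕ) (i k : ℕ) (hk : k < L.length) :
    cntL L i (k+1) = cntL L i k + if L.getD k 0 = i then 1 else 0 := by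
  rw [cntL, cntL, List.take_succ, List.count_append,
    List.getElem?_eq_getElem hk, List.getD_eq_getElem?_getD, List.getElem?_eq_getElem hk]
  simp only [Option.toList_some, Option.getD_some]
  rcases eq_or_ne (L[k]) i with h | h <;> simp [h, List.count_singleton']

lemma kcol_eq_cntL (a : ℕ → ℕ) (L : List ℕ) (k : ℕ) :
    kcol a L k = if cntL L (L.getD k 0) k < a (L.getD k 0) then 0 else 1 := rfl

-- ### queue red counts
def redQ (T k : ℕ) : ℕ := ((Finset.range k).filter (fun j => j % (2*T) < T)).card

lemma redQ_succ (T k : ℕ) :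
    redQ T (k+1) = redQ T k + if k % (2*T) < T then 1 else 0 := by
  unfold redQ
  rw [Finset.range_add_one, Finset.filter_insert]
  split <;> simp [Finset.card_insert_of_notMem, Finset.mem_filter]

lemma redQ_mul (T : ℕ) (hT : 0 < T) (g : ℕ) : redQ T (2*T*g) = T*g := by
  induction g with
  | zero => simp [redQ]
  | succ m ih =>
    have hsplit : Finset.range (2*T*(m+1))
        = Finset.range (2*T*m) ∪ Finset.Ico (2*T*m) (2*T*(m+1)) := by
      simp only [Finset.range_eq_Ico]
      rw [Finset.Ico_union_Ico_eq_Ico (by omega) (by nlinarith)]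
    have hdisj : Disjoint ((Finset.range (2*T*m)).filter (fun j => j % (2*T) < T))
        ((Finset.Ico (2*T*m) (2*T*(m+1))).filter (fun j => j % (2*T) < T)) := by
      apply Finset.disjoint_filter_filter
      rw [Finset.range_eq_Ico]
      exact Finset.Ico_disjoint_Ico_consecutive _ _ _
    have hIco : Finset.Ico (2*T*m) (2*T*(m+1)) = (Finset.range (2*T)).image (fun r => 2*T*m + r) := by
      ext x
      simp only [Finset.mem_Ico, Finset.mem_image, Finset.mem_range]
      have hmm : 2*T*(m+1) = 2*T*m + 2*T := by ring
      constructor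
      · intro hx; exact ⟨x - 2*T*m, by omega, by omega⟩
      · rintro ⟨r, hr, rfl⟩; omega
    have hcard : ((Finset.Ico (2*T*m) (2*T*(m+1))).filter (fun j => j % (2*T) < T)).card = T := by
      rw [hIco, Finset.filter_image]
      rw [Finset.card_image_of_injective _ (fun x y h => by omega)]
      have : (Finset.range (2*T)).filter (fun r => (2*T*m + r) % (2*T) < T)
          = Finset.range T := by
        ext r
        simp only [Finset.mem_filter, Finset.mem_range]
        constructor
        · rintro ⟨h1, h2⟩
          rwa [Nat.mul_add_mod, Nat.mod_eq_of_lt h1] at h2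
        · intro h
          refine ⟨by omega, ?_⟩
          rwa [Nat.mul_add_mod, Nat.mod_eq_of_lt (by omega)]
      rw [this, Finset.card_range]
    unfold redQ
    rw [hsplit, Finset.filter_union, Finset.card_union_of_disjoint hdisj]
    rw [show ((Finset.range (2*T*m)).filter (fun j => j % (2*T) < T)).card = redQ T (2*T*m) from rfl,
      ih, hcard]
    ring

lemma sum_cntL (m : ℕ) (L : List ℕ) (hmem : ∀ x ∈ L, x < m) {k : ℕ} (hk : k ≤ L.length) :
    ∑ i ∈ Finset.range m, cntL L i k = k := by
  have h1 : ∀ x ∈ L.take k, x < m := fun x hx => hmem x ((List.take_sublist _ _).mem hx)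
  have h2 := length_eq_sum_count m (L.take k) h1
  rw [List.length_take] at h2
  rw [show (∑ i ∈ Finset.range m, cntL L i k) = ∑ i ∈ Finset.range m, (L.take k).count i from rfl,
    h2, min_eq_left hk]

lemma getD_lt_mem (L : List ℕ) {k : ℕ} (hk : k < L.length) : L.getD k 0 ∈ L := by
  rw [List.getD_eq_getElem?_getD, List.getElem?_eq_getElem hk]
  exact List.getElem_mem hk

lemma red_sum (n T : ℕ) (a : ℕ → ℕ) (L : List ℕ)
    (hmem : ∀ x ∈ L, x < 3*n)
    (hcol : ∀ k < L.length, kcol a L k = qcol T k) :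
    ∀ k, k ≤ L.length → ∑ i ∈ Finset.range (3*n), min (cntL L i k) (a i) = redQ T k := by
  intro k
  induction k with
  | zero => intro _; simp [cntL_zero, redQ]
  | succ kk ih =>
    intro hk
    have hkk : kk < L.length := by omega
    have ihh := ih (by omega)
    have hi0lt : L.getD kk 0 < 3*n := hmem _ (getD_lt_mem L hkk)
    set i0 := L.getD kk 0 with hi0
    have hiff : (cntL L i0 kk < a i0) ↔ (kk % (2*T) < T) := by
      have := hcol kk hkk
      rw [kcol_eq_cntL, ← hi0] at this
      unfold qcol at this
      constructor
      · intro h; by_contra h2; rw [if_pos h, if_neg h2] at this; exact absurd this (by omega)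
      · intro h; by_contra h2; rw [if_neg h2, if_pos h] at this; exact absurd this (by omega)
    have hmemr : i0 ∈ Finset.range (3*n) := Finset.mem_range.2 hi0lt
    rw [Finset.sum_eq_sum_sdiff_singleton_add hmemr] 
    rw [Finset.sum_eq_sum_sdiff_singleton_add hmemr
        (fun i => min (cntL L i kk) (a i))] at ihh
    have hsame : ∑ i ∈ Finset.range (3*n) \ {i0}, min (cntL L i (kk+1)) (a i)
        = ∑ i ∈ Finset.range (3*n) \ {i0}, min (cntL L i kk) (a i) := by
      apply Finset.sum_congr rfl
      intro i hi
      have hne : i0 ≠ i := by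
        intro h; rw [h] at hi; simp at hi
      rw [cntL_succ L i kk hkk, ← hi0, if_neg hne, Nat.add_zero]
    have hlast : min (cntL L i0 (kk+1)) (a i0)
        = min (cntL L i0 kk) (a i0) + if cntL L i0 kk < a i0 then 1 else 0 := by
      rw [cntL_succ L i0 kk hkk, ← hi0, if_pos rfl]
      rcases Nat.lt_or_ge (cntL L i0 kk) (a i0) with h | h
      · rw [if_pos h]; omega
      · rw [if_neg (by omega)]; omega
    rw [hsame, hlast, redQ_succ]
    by_cases hc : kk % (2*T) < T
    · rw [if_pos hc, if_pos (hiff.2 hc)]; omega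
    · rw [if_neg hc, if_neg (fun h => hc (hiff.1 h))]; omega

lemma green_sum (n T : ℕ) (a : ℕ → ℕ) (L : List ℕ)
    (hmem : ∀ x ∈ L, x < 3*n)
    (hcol : ∀ k < L.length, kcol a L k = qcol T k)
    {k : ℕ} (hk : k ≤ L.length) :
    ∑ i ∈ Finset.range (3*n), (cntL L i k - a i) = k - redQ T k := by
  have h1 := red_sum n T a L hmem hcol k hk
  have h2 := sum_cntL (3*n) L hmem hk
  have h3 : ∑ i ∈ Finset.range (3*n), min (cntL L i k) (a i)
      + ∑ i ∈ Finset.range (3*n), (cntL L i k - a i)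
      = ∑ i ∈ Finset.range (3*n), cntL L i k := by
    rw [← Finset.sum_add_distrib]
    exact Finset.sum_congr rfl (fun i _ => by omega)
  omega

lemma div_eq_iff_bounds {t x g : ℕ} (ht : 0 < t) : x / t = g ↔ t*g ≤ x ∧ x < t*(g+1) := by
  constructor
  · rintro rfl
    refine ⟨by rw [mul_comm]; exact Nat.div_mul_le_self x t, ?_⟩
    rw [mul_comm]
    exact (Nat.div_lt_iff_lt_mul ht).1 (Nat.lt_succ_self _)
  · rintro ⟨h1, h2⟩
    refine Nat.le_antisymm ?_ ?_
    · exact Nat.lt_succ_iff.1 ((Nat.div_lt_iff_lt_mul ht).2 (by rw [mul_comm] at h2; exact h2))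
    · exact (Nat.le_div_iff_mul_le ht).2 (by rw [mul_comm] at h1; exact h1)

lemma trisum (S : Finset ℕ) (f F : ℕ → ℕ) (g : ℕ) :
    ∑ i ∈ S, F i = ∑ i ∈ S.filter (fun i => f i < g), F i
      + (∑ i ∈ S.filter (fun i => f i = g), F i
      + ∑ i ∈ S.filter (fun i => g < f i), F i) := by
  rw [← Finset.sum_filter_add_sum_filter_not S (fun i => f i < g) F]
  congr 1
  have hsplit : S.filter (fun i => ¬ f i < g)
      = S.filter (fun i => f i = g) ∪ S.filter (fun i => g < f i) := by
    ext x
    simp only [Finset.mem_filter, Finset.mem_union]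
    constructor
    · rintro ⟨hx, h⟩
      rcases Nat.lt_or_ge g (f x) with h2 | h2
      · exact Or.inr ⟨hx, h2⟩
      · exact Or.inl ⟨hx, by omega⟩
    · rintro (⟨hx, h⟩ | ⟨hx, h⟩) <;> exact ⟨hx, by omega⟩
  rw [hsplit, Finset.sum_union]
  rw [Finset.disjoint_left]
  rintro x hx hy
  simp only [Finset.mem_filter] at hx hy
  omega

theorem partition_of_list (n T : ℕ) (a : ℕ → ℕ) (hn : 0 < n) (hT : 0 < T)
    (hsum : ∑ i ∈ Finset.range (3*n), a i = n*T)
    (hbound : ∀ i < 3*n, T < 4*a i ∧ 2*a i < T)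
    (L : List ℕ) (hmem : ∀ x ∈ L, x < 3*n)
    (hcnt : ∀ i < 3*n, L.count i = 2*(a i))
    (hcol : ∀ k < L.length, kcol a L k = qcol T k) :
    HasPartition n T a := by
  classical
  have ht2 : 0 < 2*T := by omega
  have hlen : L.length = 2*T*n := by
    have h1 := length_eq_sum_count (3*n) L hmem
    have h2 : ∑ i ∈ Finset.range (3*n), L.count i = ∑ i ∈ Finset.range (3*n), 2*(a i) :=
      Finset.sum_congr rfl (fun i hi => hcnt i (Finset.mem_range.1 hi))
    rw [h2, ← Finset.mul_sum, hsum] at h1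
    rw [← h1]; ring
  have hlpos : 1 ≤ L.length := by
    rw [hlen]
    have := Nat.mul_pos ht2 hn
    omega
  have hex : ∀ i, i < 3*n → ∃ k, a i < cntL L i (k+1) := by
    intro i hi
    have hap : 0 < a i := by have := hbound i hi; omega
    refine ⟨L.length - 1, ?_⟩
    rw [show L.length - 1 + 1 = L.length by omega, cntL_len, hcnt i hi]
    omega
  set f : ℕ → ℕ := fun i => if h : ∃ k, a i < cntL L i (k+1) then Nat.find h / (2*T) else 0
    with hfdef
  have hfg : ∀ (i : ℕ) (h : ∃ k, a i < cntL L i (k+1)) (m : ℕ),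
      (Nat.find h < m ↔ a i < cntL L i m) := by
    intro i h m
    constructor
    · intro hlt
      exact lt_of_lt_of_le (Nat.find_spec h) (cntL_mono L i hlt)
    · intro hm
      rcases m with _ | mm
      · rw [cntL_zero] at hm; omega
      · exact Nat.lt_succ_of_le (Nat.find_le hm)
  have hfval : ∀ i, (h : ∃ k, a i < cntL L i (k+1)) → f i = Nat.find h / (2*T) := by
    intro i h
    rw [hfdef]
    exact dif_pos h
  have hchar : ∀ i, i < 3*n → ∀ g, (f i = g ↔
      (cntL L i (2*T*g) ≤ a i ∧ a i < cntL L i (2*T*(g+1)))) := by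
    intro i hi g
    have h := hex i hi
    rw [hfval i h, div_eq_iff_bounds ht2]
    constructor
    · rintro ⟨h1, h2⟩
      refine ⟨?_, (hfg i h _).1 h2⟩
      by_contra hc
      push_neg at hc
      have := (hfg i h _).2 hc
      omega
    · rintro ⟨h1, h2⟩
      refine ⟨?_, (hfg i h _).2 h2⟩
      by_contra hc
      push_neg at hc
      have := (hfg i h _).1 hc
      omega
  have hchargt : ∀ i, i < 3*n → ∀ g, (g < f i ↔ cntL L i (2*T*(g+1)) ≤ a i) := by
    intro i hi g
    have h := hex i hi
    rw [hfval i h]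
    constructor
    · intro hg
      by_contra hc
      push_neg at hc
      have h2 := (hfg i h (2*T*(g+1))).2 hc
      have h3 := (div_eq_iff_bounds (x := Nat.find h) ht2 (g := Nat.find h / (2*T))).1 rfl
      have h4 : 2*T*(Nat.find h / (2*T)) < 2*T*(g+1) := by omega
      have h5 : Nat.find h / (2*T) < g + 1 := lt_of_mul_lt_mul_left h4 (by omega)
      omega
    · intro hg
      have h2 : ¬ (Nat.find h < 2*T*(g+1)) := by
        rw [hfg i h]
        omega
      push_neg at h2
      have h3 : g + 1 ≤ Nat.find h / (2*T) :=
        (Nat.le_div_iff_mul_le ht2).2 (by rw [mul_comm] at h2; exact h2)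
      omega
  have key : ∀ g, g ≤ n →
      (∀ i, i < 3*n → (f i < g → cntL L i (2*T*g) = 2*(a i)) ∧ (g ≤ f i → cntL L i (2*T*g) = 0))
      ∧ (∀ g', g' < g → ((Finset.range (3*n)).filter (fun i => f i = g')).card = 3
          ∧ ((Finset.range (3*n)).filter (fun i => f i = g')).sum a = T) := by
    intro g
    induction g with
    | zero =>
      intro _
      refine ⟨fun i hi => ⟨fun h => absurd h (by omega), fun _ => ?_⟩,
        fun g' hg' => absurd hg' (by omega)⟩
      rw [show 2*T*0 = 0 by ring, cntL_zero]
    | succ g ihg =>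
      intro hgn
      obtain ⟨ih1, ih2⟩ := ihg (by omega)
      have hmle : 2*T*g ≤ 2*T*(g+1) := Nat.mul_le_mul_left _ (by omega)
      have hm''len : 2*T*(g+1) ≤ L.length := by
        rw [hlen]; exact Nat.mul_le_mul_left _ (by omega)
      have hmlen : 2*T*g ≤ L.length := le_trans hmle hm''len
      have hA'' : ∀ i, i < 3*n → f i < g → cntL L i (2*T*(g+1)) = 2*(a i) := by
        intro i hi hfi
        have h1 := (ih1 i hi).1 hfi
        have h2 := cntL_mono L i hmle
        have h3 := cntL_le L i (2*T*(g+1))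
        rw [hcnt i hi] at h3
        omega
      have hB''ub : ∀ i, i < 3*n → cntL L i (2*T*(g+1)) ≤ 2*(a i) := by
        intro i hi
        have h3 := cntL_le L i (2*T*(g+1)); rw [hcnt i hi] at h3; exact h3
      have hr_m := red_sum n T a L hmem hcol _ hmlen
      have hr_m'' := red_sum n T a L hmem hcol _ hm''len
      rw [redQ_mul T hT g] at hr_m
      rw [redQ_mul T hT (g+1)] at hr_m''
      have hg_m := green_sum n T a L hmem hcol hmlen
      have hg_m'' := green_sum n T a L hmem hcol hm''len
      rw [redQ_mul T hT g] at hg_m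
      rw [redQ_mul T hT (g+1)] at hg_m''
      have he1 : 2*T*g - T*g = T*g := by
        have : 2*T*g = T*g + T*g := by ring
        omega
      have he2 : 2*T*(g+1) - T*(g+1) = T*(g+1) := by
        have : 2*T*(g+1) = T*(g+1) + T*(g+1) := by ring
        omega
      rw [he1] at hg_m
      rw [he2] at hg_m''
      -- rewrite the four sums through the trisum decomposition
      rw [trisum (Finset.range (3*n)) f _ g] at hr_m hr_m'' hg_m hg_m''
      -- evaluate the pieces
      have emem : ∀ P : ℕ → Prop, ∀ (inst : DecidablePred P), ∀ i,
          i ∈ (Finset.range (3*n)).filter (fun j => P j) → i < 3*n ∧ P i := by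
        intro P inst i hi
        have := Finset.mem_filter.1 hi
        exact ⟨Finset.mem_range.1 this.1, this.2⟩
      have eA'' : ∑ i ∈ (Finset.range (3*n)).filter (fun i => f i < g),
          min (cntL L i (2*T*(g+1))) (a i)
          = ∑ i ∈ (Finset.range (3*n)).filter (fun i => f i < g), a i := by
        refine Finset.sum_congr rfl (fun i hi => ?_)
        obtain ⟨h1, h2⟩ := emem _ _ i hi
        rw [hA'' i h1 h2]; omega
      have eB'' : ∑ i ∈ (Finset.range (3*n)).filter (fun i => f i = g),
          min (cntL L i (2*T*(g+1))) (a i)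
          = ∑ i ∈ (Finset.range (3*n)).filter (fun i => f i = g), a i := by
        refine Finset.sum_congr rfl (fun i hi => ?_)
        obtain ⟨h1, h2⟩ := emem _ _ i hi
        have := ((hchar i h1 g).1 h2).2
        omega
      have eC'' : ∀ i ∈ (Finset.range (3*n)).filter (fun i => g < f i),
          min (cntL L i (2*T*(g+1))) (a i) = cntL L i (2*T*(g+1)) := by
        intro i hi
        obtain ⟨h1, h2⟩ := emem _ _ i hi
        have := (hchargt i h1 g).1 h2
        omega
      have eA : ∑ i ∈ (Finset.range (3*n)).filter (fun i => f i < g),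
          min (cntL L i (2*T*g)) (a i)
          = ∑ i ∈ (Finset.range (3*n)).filter (fun i => f i < g), a i := by
        refine Finset.sum_congr rfl (fun i hi => ?_)
        obtain ⟨h1, h2⟩ := emem _ _ i hi
        rw [(ih1 i h1).1 h2]; omega
      have eB : ∀ i ∈ (Finset.range (3*n)).filter (fun i => f i = g),
          cntL L i (2*T*g) = 0 := by
        intro i hi
        obtain ⟨h1, h2⟩ := emem _ _ i hi
        exact (ih1 i h1).2 (by omega)
      have eC : ∀ i ∈ (Finset.range (3*n)).filter (fun i => g < f i),
          cntL L i (2*T*g) = 0 := by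
        intro i hi
        obtain ⟨h1, h2⟩ := emem _ _ i hi
        exact (ih1 i h1).2 (by omega)
      have egA'' : ∑ i ∈ (Finset.range (3*n)).filter (fun i => f i < g),
          (cntL L i (2*T*(g+1)) - a i)
          = ∑ i ∈ (Finset.range (3*n)).filter (fun i => f i < g), a i := by
        refine Finset.sum_congr rfl (fun i hi => ?_)
        obtain ⟨h1, h2⟩ := emem _ _ i hi
        rw [hA'' i h1 h2]; omega
      have egC'' : ∑ i ∈ (Finset.range (3*n)).filter (fun i => g < f i),
          (cntL L i (2*T*(g+1)) - a i) = 0 := by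
        refine Finset.sum_eq_zero (fun i hi => ?_)
        obtain ⟨h1, h2⟩ := emem _ _ i hi
        have := (hchargt i h1 g).1 h2
        omega
      have egA : ∑ i ∈ (Finset.range (3*n)).filter (fun i => f i < g),
          (cntL L i (2*T*g) - a i)
          = ∑ i ∈ (Finset.range (3*n)).filter (fun i => f i < g), a i := by
        refine Finset.sum_congr rfl (fun i hi => ?_)
        obtain ⟨h1, h2⟩ := emem _ _ i hi
        rw [(ih1 i h1).1 h2]; omega
      rw [eA'', eB'', Finset.sum_congr rfl eC''] at hr_m''
      have eBm : ∑ i ∈ (Finset.range (3*n)).filter (fun i => f i = g),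
          min (cntL L i (2*T*g)) (a i) = 0 :=
        Finset.sum_eq_zero (fun i hi => by rw [eB i hi]; omega)
      have eCm : ∑ i ∈ (Finset.range (3*n)).filter (fun i => g < f i),
          min (cntL L i (2*T*g)) (a i) = 0 :=
        Finset.sum_eq_zero (fun i hi => by rw [eC i hi]; omega)
      rw [eA, eBm, eCm] at hr_m
      rw [egA'', egC''] at hg_m''
      have egB : ∑ i ∈ (Finset.range (3*n)).filter (fun i => f i = g),
          (cntL L i (2*T*g) - a i) = 0 :=
        Finset.sum_eq_zero (fun i hi => by rw [eB i hi]; omega)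
      have egC : ∑ i ∈ (Finset.range (3*n)).filter (fun i => g < f i),
          (cntL L i (2*T*g) - a i) = 0 :=
        Finset.sum_eq_zero (fun i hi => by rw [eC i hi]; omega)
      rw [egA, egB, egC] at hg_m
      have hTsplit : T*(g+1) = T*g + T := by ring
      -- key quantities
      have hZleX : ∑ i ∈ (Finset.range (3*n)).filter (fun i => f i = g),
          (cntL L i (2*T*(g+1)) - a i)
          ≤ ∑ i ∈ (Finset.range (3*n)).filter (fun i => f i = g), a i := by
        refine Finset.sum_le_sum (fun i hi => ?_)
        obtain ⟨h1, h2⟩ := emem _ _ i hi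
        have := hB''ub i h1
        omega
      have hXY : ∑ i ∈ (Finset.range (3*n)).filter (fun i => f i = g), a i
          + ∑ i ∈ (Finset.range (3*n)).filter (fun i => g < f i), cntL L i (2*T*(g+1))
          = T := by omega
      have hZ : ∑ i ∈ (Finset.range (3*n)).filter (fun i => f i = g),
          (cntL L i (2*T*(g+1)) - a i) = T := by omega
      have hX : ∑ i ∈ (Finset.range (3*n)).filter (fun i => f i = g), a i = T := by omega
      have hY : ∑ i ∈ (Finset.range (3*n)).filter (fun i => g < f i),
          cntL L i (2*T*(g+1)) = 0 := by omega
      -- termwise equalities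
      have hBle : ∀ j ∈ (Finset.range (3*n)).filter (fun i => f i = g),
          cntL L j (2*T*(g+1)) - a j ≤ a j := by
        intro j hj
        obtain ⟨h1, h2⟩ := emem _ _ j hj
        have := hB''ub j h1
        omega
      have hsums : ∑ i ∈ (Finset.range (3*n)).filter (fun i => f i = g),
          (cntL L i (2*T*(g+1)) - a i)
          = ∑ i ∈ (Finset.range (3*n)).filter (fun i => f i = g), a i := by omega
      have hBeq : ∀ i ∈ (Finset.range (3*n)).filter (fun i => f i = g),
          cntL L i (2*T*(g+1)) - a i = a i :=
        (Finset.sum_eq_sum_iff_of_le hBle).1 hsums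
      have hCeq : ∀ i ∈ (Finset.range (3*n)).filter (fun i => g < f i),
          cntL L i (2*T*(g+1)) = 0 := by
        intro i hi
        exact (Finset.sum_eq_zero_iff.1 hY) i hi
      constructor
      · intro i hi
        constructor
        · intro hfi
          rcases Nat.lt_or_ge (f i) g with h | h
          · exact hA'' i hi h
          · have hfe : f i = g := by omega
            have h2 := hBeq i (Finset.mem_filter.2 ⟨Finset.mem_range.2 hi, hfe⟩)
            have h3 := ((hchar i hi g).1 hfe).2
            omega
        · intro hfi
          exact hCeq i (Finset.mem_filter.2 ⟨Finset.mem_range.2 hi, by omega⟩)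
      · intro g' hg'
        rcases Nat.lt_or_ge g' g with h | h
        · exact ih2 g' h
        · have hge : g' = g := by omega
          subst hge
          refine ⟨?_, hX⟩
          -- cardinality is 3
          set B := (Finset.range (3*n)).filter (fun i => f i = g') with hBdef
          have hub : ∀ i ∈ B, 2*(a i) ≤ T - 1 := by
            intro i hi
            obtain ⟨h1, h2⟩ := emem _ _ i hi
            have := (hbound i h1).2
            omega
          have hlb : ∀ i ∈ B, T + 1 ≤ 4*(a i) := by
            intro i hi
            obtain ⟨h1, h2⟩ := emem _ _ i hi
            have := (hbound i h1).1
            omega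
          have hs2 : ∑ i ∈ B, 2*(a i) = 2*T := by
            rw [← Finset.mul_sum, hX]
          have hs4 : ∑ i ∈ B, 4*(a i) = 4*T := by
            rw [← Finset.mul_sum, hX]
          have hup := Finset.sum_le_card_nsmul B (fun i => 2*(a i)) (T-1) hub
          have hlo := Finset.card_nsmul_le_sum B (fun i => 4*(a i)) (T+1) hlb
          rw [hs2, smul_eq_mul] at hup
          rw [hs4, smul_eq_mul] at hlo
          by_contra hcard
          rcases Nat.lt_or_ge B.card 3 with hc | hc
          · have : B.card * (T-1) ≤ 2 * (T-1) := Nat.mul_le_mul_right _ (by omega)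
            omega
          · have hc4 : 4 ≤ B.card := by omega
            have : 4 * (T+1) ≤ B.card * (T+1) := Nat.mul_le_mul_right _ hc4
            omega
  -- conclusion
  refine ⟨f, ?_, fun g hg => (key n (le_refl n)).2 g hg⟩
  intro i hi
  have h := hex i hi
  have hap : 0 < a i := by have := hbound i hi; omega
  have hfind : Nat.find h < L.length := by
    rw [hfg i h]
    rw [cntL_len, hcnt i hi]
    omega
  rw [hfval i h]
  rw [hlen] at hfind
  refine (Nat.div_lt_iff_lt_mul ht2).2 ?_
  calc Nat.find h < 2*T*n := hfind
  _ = n*(2*T) := by ring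

/-- Backward direction of the 3-Partition reduction with one spot and
capacity-1 buses: a solution yields a 3-partition. -/
theorem busOut_to_threePartition (n T : ℕ) (a : ℕ → ℕ)
    (hn : 0 < n) (hT : 0 < T)
    (hsum : ∑ i ∈ Finset.range (3 * n), a i = n * T)
    (hbound : ∀ i < 3 * n, T < 4 * a i ∧ 2 * a i < T)
    (hsolv : Solvable (GMconf n T a 1 1)) :
    HasPartition n T a := by
  obtain ⟨L, hmem, hcnt, hcol⟩ := exists_dispatch hsolv
  exact partition_of_list n T a hn hT hsum hbound L hmem hcnt hcol
end
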